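/- For an even positive integer 2m and positive integer D, the numerator of ζ_D(1−2m) (a rational number) has absolute value at most e^{C·m(log m + log D)} for some absolute constant C; equivalently, its bit-size is O(m(log m + log D)). -/

import Mathlib

/-!
The zeta factor is the L-function of the trivial character mod 1, so both factors are values
`L(1 - 2m, χ)` of quadratic characters. For odd `χ` the value is `0`; for even `χ` mod `N` it is
`-(N ^ (2m - 1) / 2m) ∑ⱼ χ(j) B₂ₘ(j / N)`. The recursion for the Bernoulli numbers shows that
`(n + 1)! Bₙ` is an integer and `|Bₙ| ≤ 2ⁿ n!`, so `Nⁿ (n + 1)! Bₙ(j / N)` is an integer of size at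
most `Nⁿ 2ⁿ ((n + 1)!)²`. Hence `L(1 - 2m, χ) · 2m N (2m + 1)!` is an integer `z` with
`|z| ≤ N ^ (2m + 1) 4ᵐ ((2m + 1)!)²`, and the numerator of the product of the two values divides
`z₁ z₂`, which is at most `(mD) ^ (43m)` as soon as `mD ≥ 2`. The remaining case is
`ζ(-1)² = 1/144`.
-/

open Finset Nat

theorem Rat.abs_num_le_of_mul_eq_int {q : ℚ} {b : ℕ} (hb : b ≠ 0) {z : ℤ} (h : q * b = z) :
    |q.num| ≤ |z| := by
  obtain rfl | hz := eq_or_ne z 0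
  · simp_all
  have hq : q = Rat.divInt z b := by
    rw [Rat.divInt_eq_div, ← h, Int.cast_natCast, mul_div_cancel_right₀ _ (by exact_mod_cast hb)]
  have hdvd : q.num ∣ z := hq ▸ Rat.num_dvd z (Int.natCast_ne_zero.mpr hb)
  exact Int.le_of_dvd (abs_pos.mpr hz) ((abs_dvd_abs _ _).mpr hdvd)

theorem succ_mul_bernoulli' (n : ℕ) :
    ((n : ℚ) + 1) * bernoulli' n =
      n + 1 - ∑ k ∈ range n, ((n + 1).choose k : ℚ) * bernoulli' k := by
  have h := sum_bernoulli' (n + 1)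
  rw [sum_range_succ, Nat.choose_succ_self_right] at h
  push_cast at h
  linarith

theorem factorial_mul_choose_mul_two_le {n k : ℕ} (hk : k < n) :
    k ! * (n + 1).choose k * 2 ≤ (n + 1)! := by
  calc k ! * (n + 1).choose k * 2 ≤ (n + 1).choose k * k ! * (n + 1 - k)! := by
        rw [mul_comm (k !)]
        exact Nat.mul_le_mul_left _ (Nat.factorial_le (show 2 ≤ n + 1 - k by omega))
    _ = (n + 1)! := Nat.choose_mul_factorial_mul_factorial (by omega)

theorem abs_bernoulli'_le (n : ℕ) : |bernoulli' n| ≤ 2 ^ n * n ! := by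
  induction n using Nat.strong_induction_on with
  | _ n ih =>
  have hterm : ∀ k ∈ range n, |((n + 1).choose k : ℚ) * bernoulli' k| ≤ (n + 1)! / 2 * 2 ^ k := by
    intro k hk
    have hk := mem_range.mp hk
    have hchoose : (k ! * (n + 1).choose k * 2 : ℚ) ≤ (n + 1)! := by
      exact_mod_cast factorial_mul_choose_mul_two_le hk
    rw [abs_mul, Nat.abs_cast]
    calc ((n + 1).choose k : ℚ) * |bernoulli' k| ≤ (n + 1).choose k * (2 ^ k * k !) := by
          gcongr; exact ih k hk
      _ ≤ (n + 1)! / 2 * 2 ^ k := by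
          nlinarith [mul_le_mul_of_nonneg_left hchoose (pow_nonneg (zero_le_two (α := ℚ)) k)]
  have hsum : |∑ k ∈ range n, ((n + 1).choose k : ℚ) * bernoulli' k| ≤ (n + 1)! / 2 * (2 ^ n - 1) :=
    calc _ ≤ ∑ k ∈ range n, (n + 1)! / 2 * (2 : ℚ) ^ k :=
          (abs_sum_le_sum_abs _ _).trans (sum_le_sum hterm)
      _ = (n + 1)! / 2 * (2 ^ n - 1) := by
          rw [← mul_sum, geom_sum_eq (by norm_num : (2 : ℚ) ≠ 1)]
          norm_num
  have hsucc : ((n : ℚ) + 1) * |bernoulli' n| ≤ ((n : ℚ) + 1) * (1 + n ! / 2 * (2 ^ n - 1)) := by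
    rw [← abs_of_pos (by positivity : (0 : ℚ) < n + 1), ← abs_mul, succ_mul_bernoulli',
      abs_of_pos (by positivity : (0 : ℚ) < n + 1)]
    calc _ ≤ |(n : ℚ) + 1| + |∑ k ∈ range n, ((n + 1).choose k : ℚ) * bernoulli' k| := abs_sub _ _
      _ ≤ (n + 1) + (n + 1)! / 2 * (2 ^ n - 1) := by
          rw [abs_of_pos (by positivity)]; gcongr
      _ = _ := by rw [Nat.factorial_succ]; push_cast; ring
  have h1 : (1 : ℚ) ≤ n ! := by exact_mod_cast n.factorial_pos
  have h2 : (1 : ℚ) ≤ 2 ^ n := one_le_pow₀ (by norm_num)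
  have hB := le_of_mul_le_mul_left hsucc (by positivity)
  nlinarith [mul_le_mul h1 h2 zero_le_one (by positivity)]

theorem factorial_mul_bernoulli'_mem_range (n : ℕ) :
    ((n + 1)! : ℚ) * bernoulli' n ∈ (Int.castRingHom ℚ).range := by
  induction n using Nat.strong_induction_on with
  | _ n ih =>
  have hrec : ((n + 1)! : ℚ) * bernoulli' n = (n + 1)! -
      ∑ k ∈ range n,
        (((n + 1).choose k * (n ! / (k + 1)!) : ℕ) : ℚ) * ((k + 1)! * bernoulli' k) := by
    have hterm : ∀ k ∈ range n, (((n + 1).choose k * (n ! / (k + 1)!) : ℕ) : ℚ) *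
        ((k + 1)! * bernoulli' k) = ((n + 1).choose k : ℚ) * bernoulli' k * n ! := by
      intro k hk
      rw [Nat.cast_mul,
        Nat.cast_div (Nat.factorial_dvd_factorial (mem_range.mp hk)) (by positivity)]
      field_simp
    rw [sum_congr rfl hterm, ← sum_mul, Nat.factorial_succ]
    push_cast
    linear_combination (n ! : ℚ) * succ_mul_bernoulli' n
  rw [hrec]
  exact sub_mem (natCast_mem _ _)
    (sum_mem fun k hk => mul_mem (natCast_mem _ _) (ih k (mem_range.mp hk)))

theorem abs_bernoulli_le (n : ℕ) : |bernoulli n| ≤ 2 ^ n * n ! := by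
  simpa [bernoulli, abs_mul] using abs_bernoulli'_le n

theorem factorial_mul_bernoulli_mem_range (n : ℕ) :
    ((n + 1)! : ℚ) * bernoulli n ∈ (Int.castRingHom ℚ).range := by
  rw [bernoulli, mul_left_comm]
  exact mul_mem (pow_mem (neg_mem (one_mem _)) n) (factorial_mul_bernoulli'_mem_range n)

theorem Polynomial.abs_eval_bernoulli_le (n : ℕ) {x : ℚ} (hx₀ : 0 ≤ x) (hx₁ : x ≤ 1) :
    |(bernoulli n).eval x| ≤ 2 ^ n * (n + 1)! := by
  have hterm : ∀ i ∈ range (n + 1),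
      |_root_.bernoulli i * n.choose i * x ^ (n - i)| ≤ 2 ^ n * n ! := by
    intro i hi
    have hi : i ≤ n := Nat.lt_succ_iff.mp (mem_range.mp hi)
    have hchoose : i ! * n.choose i ≤ n ! :=
      calc i ! * n.choose i ≤ n.choose i * i ! * (n - i)! := by
            rw [mul_comm (i !)]; exact Nat.le_mul_of_pos_right _ (factorial_pos _)
        _ = n ! := choose_mul_factorial_mul_factorial hi
    have hpow : (2 : ℚ) ^ i ≤ 2 ^ n := pow_le_pow_right₀ one_le_two hi
    rw [abs_mul, abs_mul, Nat.abs_cast, abs_pow, abs_of_nonneg hx₀]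
    calc |_root_.bernoulli i| * n.choose i * x ^ (n - i) ≤ 2 ^ i * i ! * n.choose i * 1 := by
          gcongr
          · exact abs_bernoulli_le i
          · exact pow_le_one₀ hx₀ hx₁
      _ ≤ 2 ^ n * n ! := by
          rw [mul_one, mul_assoc]
          gcongr
          exact_mod_cast hchoose
  rw [bernoulli, eval_finsetSum]
  simp only [eval_monomial]
  calc _ ≤ ∑ i ∈ range (n + 1), |_root_.bernoulli i * n.choose i * x ^ (n - i)| :=
        abs_sum_le_sum_abs _ _
    _ ≤ ∑ _i ∈ range (n + 1), (2 ^ n * n ! : ℚ) := sum_le_sum hterm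
    _ = 2 ^ n * (n + 1)! := by
        rw [sum_const, card_range, nsmul_eq_mul, Nat.factorial_succ]
        push_cast
        ring

theorem Polynomial.pow_mul_factorial_mul_eval_bernoulli_mem_range (n j : ℕ) {d : ℕ} (hd : d ≠ 0) :
    (d : ℚ) ^ n * (n + 1)! * (bernoulli n).eval (j / d : ℚ) ∈ (Int.castRingHom ℚ).range := by
  rw [bernoulli, eval_finsetSum, mul_sum]
  refine sum_mem fun i hi => ?_
  have hi : i ≤ n := Nat.lt_succ_iff.mp (mem_range.mp hi)
  have hdvd : (i + 1)! ∣ (n + 1)! := Nat.factorial_dvd_factorial (by omega)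
  have hterm : (d : ℚ) ^ n * (n + 1)! *
      (monomial (n - i) (_root_.bernoulli i * n.choose i)).eval (j / d : ℚ)
      = (((n + 1)! / (i + 1)! * n.choose i * j ^ (n - i) * d ^ i : ℕ) : ℚ) *
        ((i + 1)! * _root_.bernoulli i) := by
    rw [eval_monomial, Nat.cast_mul, Nat.cast_mul, Nat.cast_mul, Nat.cast_div hdvd (by positivity),
      div_pow, ← Nat.sub_add_cancel hi, pow_add]
    push_cast
    rw [Nat.add_sub_cancel]
    field_simp
  rw [hterm]
  exact mul_mem (natCast_mem _ _) (factorial_mul_bernoulli_mem_range i)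

theorem MulChar.IsQuadratic.exists_int_eq {R R' : Type*} [CommMonoid R] [CommRing R']
    {χ : MulChar R R'} (hχ : χ.IsQuadratic) : ∃ c : R → ℤ, (∀ a, |c a| ≤ 1) ∧ ∀ a, χ a = c a := by
  have h (a : R) : ∃ z : ℤ, |z| ≤ 1 ∧ χ a = z := by
    rcases hχ a with h | h | h
    exacts [⟨0, by simp, by simp [h]⟩, ⟨1, by simp, by simp [h]⟩, ⟨-1, by simp, by simp [h]⟩]
  choose c hc₁ hc₂ using h
  exact ⟨c, hc₁, hc₂⟩

theorem exists_pow_mul_factorial_mul_sum_eval_bernoulli_eq_int {N : ℕ} [NeZero N]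
    (c : ZMod N → ℤ) (hc : ∀ j, |c j| ≤ 1) (n : ℕ) :
    ∃ z : ℤ, (N : ℚ) ^ n * (n + 1)! *
        ∑ j : ZMod N, c j * (Polynomial.bernoulli n).eval (j.val / N : ℚ) = z ∧
      |z| ≤ N ^ (n + 1) * 2 ^ n * (n + 1)! ^ 2 := by
  obtain ⟨z, hz⟩ : (N : ℚ) ^ n * (n + 1)! *
      ∑ j : ZMod N, c j * (Polynomial.bernoulli n).eval (j.val / N : ℚ) ∈
        (Int.castRingHom ℚ).range := by
    rw [mul_sum]
    refine sum_mem fun j _ => ?_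
    rw [mul_left_comm]
    exact mul_mem (intCast_mem _ _)
      (Polynomial.pow_mul_factorial_mul_eval_bernoulli_mem_range n j.val (NeZero.ne N))
  change (z : ℚ) = _ at hz
  refine ⟨z, hz.symm, ?_⟩
  have hterm (j : ZMod N) :
      |c j * (Polynomial.bernoulli n).eval (j.val / N : ℚ)| ≤ 2 ^ n * (n + 1)! := by
    have hx₁ : (j.val / N : ℚ) ≤ 1 :=
      div_le_one_of_le₀ (by exact_mod_cast (ZMod.val_lt j).le) (by positivity)
    rw [abs_mul, ← one_mul (2 ^ n * _ : ℚ)]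
    gcongr
    · exact_mod_cast hc j
    · exact Polynomial.abs_eval_bernoulli_le n (by positivity) hx₁
  have hsum := (abs_sum_le_sum_abs _ _).trans (sum_le_sum fun j (_ : j ∈ univ) => hterm j)
  rw [sum_const, Finset.card_univ, ZMod.card, nsmul_eq_mul] at hsum
  have hbound : |(z : ℚ)| ≤ ((N ^ (n + 1) * 2 ^ n * (n + 1)! ^ 2 : ℕ) : ℚ) := by
    rw [hz, abs_mul, abs_of_nonneg (by positivity : (0 : ℚ) ≤ N ^ n * (n + 1)!)]
    calc _ ≤ (N : ℚ) ^ n * (n + 1)! * (N * (2 ^ n * (n + 1)!)) := by gcongr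
      _ = _ := by push_cast; ring
  exact_mod_cast hbound

theorem ZMod.LFunction_one_sub_two_mul_nat {N : ℕ} [NeZero N] {Φ : ZMod N → ℂ} (hΦ : Φ.Even)
    {k : ℕ} (hk : k ≠ 0) :
    LFunction Φ (1 - 2 * k) = -((N : ℂ) ^ (2 * k - 1) / (2 * k)) *
      ∑ j : ZMod N, Φ j * (((Polynomial.bernoulli (2 * k)).eval (j.val / N : ℚ) : ℚ) : ℂ) := by
  have hexp : -(1 - 2 * (k : ℂ)) = ((2 * k - 1 : ℕ) : ℂ) := by
    push_cast [Nat.cast_sub (by omega : 1 ≤ 2 * k)]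
    ring
  have hvalue (j : ZMod N) : HurwitzZeta.hurwitzZetaEven (toAddCircle j) (1 - 2 * k) =
      -1 / (2 * k) * (((Polynomial.bernoulli (2 * k)).eval (j.val / N : ℚ) : ℚ) : ℂ) := by
    have hx : (j.val / N : ℝ) ∈ Set.Icc 0 1 :=
      ⟨by positivity, div_le_one_of_le₀ (by exact_mod_cast (ZMod.val_lt j).le) (by positivity)⟩
    have hcast : ((j.val / N : ℝ) : ℂ) = algebraMap ℚ ℂ (j.val / N : ℚ) := by
      rw [eq_ratCast]; push_cast; rfl
    rw [toAddCircle_apply, HurwitzZeta.hurwitzZetaEven_one_sub_two_mul_nat hk hx, hcast,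
      Polynomial.eval_map, Polynomial.eval₂_at_apply, eq_ratCast]
  rw [LFunction_def_even hΦ, hexp, Complex.cpow_natCast, mul_sum, mul_sum]
  exact sum_congr rfl fun j _ => by rw [hvalue]; ring

theorem DirichletCharacter.exists_LFunction_one_sub_two_mul_mul_eq_int {N : ℕ} [NeZero N]
    {χ : DirichletCharacter ℂ N} (hχ : χ.IsQuadratic) {k : ℕ} (hk : k ≠ 0) :
    ∃ z : ℤ, LFunction χ (1 - 2 * k) * (2 * k * N * (2 * k + 1)! : ℕ) = z ∧
      |z| ≤ N ^ (2 * k + 1) * 2 ^ (2 * k) * (2 * k + 1)! ^ 2 := by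
  rcases χ.even_or_odd with hχ' | hχ'
  · obtain ⟨c, hc₁, hc⟩ := hχ.exists_int_eq
    obtain ⟨z, hz, hzle⟩ := exists_pow_mul_factorial_mul_sum_eval_bernoulli_eq_int c hc₁ (2 * k)
    refine ⟨-z, ?_, by rwa [abs_neg]⟩
    have hpow : (N : ℂ) ^ (2 * k - 1) * N = (N : ℂ) ^ (2 * k) := by
      rw [← pow_succ, Nat.sub_add_cancel (by omega)]
    rw [LFunction, ZMod.LFunction_one_sub_two_mul_nat hχ'.to_fun hk, Int.cast_neg,
      ← Rat.cast_intCast, ← hz]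
    simp_rw [hc]
    push_cast
    rw [← hpow]
    field_simp
  · refine ⟨0, ?_, by positivity⟩
    have hs : 1 - 2 * (k : ℂ) = -(2 * ((k - 1 : ℕ) : ℂ)) - 1 := by
      push_cast [Nat.cast_sub (Nat.one_le_iff_ne_zero.mpr hk)]
      ring
    rw [hs, hχ'.LFunction_neg_two_mul_nat_sub_one, zero_mul, Int.cast_zero]

theorem DirichletCharacter.abs_num_le_of_eq_LFunction_mul_LFunction {N₁ N₂ : ℕ} [NeZero N₁]
    [NeZero N₂] {χ₁ : DirichletCharacter ℂ N₁} {χ₂ : DirichletCharacter ℂ N₂}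
    (hχ₁ : χ₁.IsQuadratic) (hχ₂ : χ₂.IsQuadratic) {k : ℕ} (hk : k ≠ 0) {q : ℚ}
    (hq : (q : ℂ) = LFunction χ₁ (1 - 2 * k) * LFunction χ₂ (1 - 2 * k)) :
    |q.num| ≤ (N₁ * N₂) ^ (2 * k + 1) * 2 ^ (4 * k) * (2 * k + 1)! ^ 4 := by
  obtain ⟨z₁, hz₁, hz₁le⟩ := exists_LFunction_one_sub_two_mul_mul_eq_int hχ₁ hk
  obtain ⟨z₂, hz₂, hz₂le⟩ := exists_LFunction_one_sub_two_mul_mul_eq_int hχ₂ hk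
  have hqz : q * ((2 * k * N₁ * (2 * k + 1)! * (2 * k * N₂ * (2 * k + 1)!) : ℕ) : ℚ) =
      (z₁ * z₂ : ℤ) := by
    have : (q : ℂ) * ((2 * k * N₁ * (2 * k + 1)! * (2 * k * N₂ * (2 * k + 1)!) : ℕ) : ℂ) =
        (z₁ * z₂ : ℤ) := by
      rw [hq, Int.cast_mul, ← hz₁, ← hz₂, Nat.cast_mul _ (_ * _)]
      ring
    exact_mod_cast this
  have hb : 2 * k * N₁ * (2 * k + 1)! * (2 * k * N₂ * (2 * k + 1)!) ≠ 0 := by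
    simp [hk, NeZero.ne, Nat.factorial_ne_zero]
  calc |q.num| ≤ |z₁| * |z₂| := (Rat.abs_num_le_of_mul_eq_int hb hqz).trans_eq (abs_mul _ _)
    _ ≤ (N₁ ^ (2 * k + 1) * 2 ^ (2 * k) * (2 * k + 1)! ^ 2 : ℕ) *
          (N₂ ^ (2 * k + 1) * 2 ^ (2 * k) * (2 * k + 1)! ^ 2 : ℕ) :=
        mul_le_mul hz₁le hz₂le (abs_nonneg _) (by positivity)
    _ = _ := by push_cast; ring

theorem MulChar.isQuadratic_one {R R' : Type*} [CommMonoid R] [CommRing R'] :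
    (1 : MulChar R R').IsQuadratic := fun a => by
  by_cases ha : IsUnit a
  · exact .inr (.inl (MulChar.one_apply ha))
  · exact .inl (MulChar.map_nonunit _ ha)

theorem Real.exp_natCast_mul_log_add_log {a b : ℕ} (ha : a ≠ 0) (hb : b ≠ 0) (c : ℕ) :
    Real.exp (c * (Real.log a + Real.log b)) = ((a * b) ^ c : ℕ) := by
  rw [← Real.log_mul (by positivity) (by positivity), Real.exp_nat_mul,
    Real.exp_log (by positivity)]
  push_cast
  rfl

theorem riemannZeta_neg_one : riemannZeta (-1) = -1 / 12 := by
  have h := riemannZeta_neg_nat_eq_bernoulli 1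
  rw [bernoulli_two] at h
  push_cast at h
  rw [h]
  norm_num

theorem pow_mul_two_pow_mul_factorial_pow_le {m D : ℕ} (h : 2 ≤ m * D) :
    D ^ (2 * m + 1) * 2 ^ (4 * m) * (2 * m + 1)! ^ 4 ≤ (m * D) ^ (43 * m) := by
  set k := m * D
  have hm : 1 ≤ m := Nat.pos_of_ne_zero (by rintro rfl; simp [k] at h)
  have hD : D ≤ k := Nat.le_mul_of_pos_left D hm
  have hmk : m ≤ k := Nat.le_mul_of_pos_right m (Nat.pos_of_ne_zero (by rintro rfl; simp [k] at h))
  have hk0 : 0 < k := by omega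
  have hfac : (2 * m + 1)! ^ 4 ≤ k ^ (36 * m) := by
    have h3 : 2 * m + 1 ≤ k ^ 3 := by nlinarith [pow_succ k 2]
    calc (2 * m + 1)! ^ 4 ≤ ((2 * m + 1) ^ (2 * m + 1)) ^ 4 :=
          Nat.pow_le_pow_left (Nat.factorial_le_pow _) 4
      _ ≤ ((k ^ 3) ^ (2 * m + 1)) ^ 4 := Nat.pow_le_pow_left (Nat.pow_le_pow_left h3 _) 4
      _ = k ^ (12 * (2 * m + 1)) := by rw [← pow_mul, ← pow_mul]; ring_nf
      _ ≤ k ^ (36 * m) := Nat.pow_le_pow_right hk0 (by omega)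
  have hDpow : D ^ (2 * m + 1) ≤ k ^ (3 * m) :=
    (Nat.pow_le_pow_left hD _).trans (Nat.pow_le_pow_right hk0 (by omega))
  calc D ^ (2 * m + 1) * 2 ^ (4 * m) * (2 * m + 1)! ^ 4
      ≤ k ^ (3 * m) * k ^ (4 * m) * k ^ (36 * m) := by gcongr
    _ = k ^ (43 * m) := by rw [← pow_add, ← pow_add]; ring_nf

/-- For an even positive integer `2m` and a positive integer `D`, the numerator of the
rational number `ζ_D(1−2m) = ζ(1−2m)·L(1−2m, χ)` (where `χ` is the quadratic character
mod `D` attached to the real quadratic field of discriminant `D`) has absolute value at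
most `e^{C·m(log m + log D)}` for some absolute constant `C > 0`; equivalently its
bit-size is `O(m(log m + log D))`. -/
theorem numerator_dedekindZeta_value_bound :
    ∃ C : ℝ, 0 < C ∧
      ∀ (D : ℕ) [NeZero D] (χ : DirichletCharacter ℂ D), χ ^ 2 = 1 →
        ∀ m : ℕ, 1 ≤ m → ∀ q : ℚ,
          (q : ℂ) = riemannZeta (1 - 2 * (m : ℂ)) *
              DirichletCharacter.LFunction χ (1 - 2 * (m : ℂ)) →
            |(q.num : ℝ)| ≤ Real.exp (C * m * (Real.log m + Real.log D)) := by
  refine ⟨43, by norm_num, fun D _ χ hχ m hm q hq => ?_⟩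
  by_cases h11 : m = 1 ∧ D = 1
  · obtain ⟨rfl, rfl⟩ := h11
    rw [DirichletCharacter.LFunction_modOne_eq, show (1 : ℂ) - 2 * (1 : ℕ) = -1 by norm_num,
      riemannZeta_neg_one] at hq
    have hq' : q = 1 / 144 := by
      exact_mod_cast hq.trans (by norm_num : (-1 / 12 * (-1 / 12) : ℂ) = ((1 / 144 : ℚ) : ℂ))
    subst hq'
    norm_num
  have hmD : 2 ≤ m * D := by
    have hD : 1 ≤ D := NeZero.one_le
    by_contra! h
    exact h11 ⟨by nlinarith, by nlinarith⟩
  rw [← DirichletCharacter.LFunction_modOne_eq (χ := 1)] at hq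
  have hnum := DirichletCharacter.abs_num_le_of_eq_LFunction_mul_LFunction MulChar.isQuadratic_one
    (MulChar.isQuadratic_iff_sq_eq_one.mpr hχ) (by omega) hq
  rw [Nat.cast_one, one_mul] at hnum
  rw [show (43 : ℝ) * m = ((43 * m : ℕ) : ℝ) by push_cast; rfl,
    Real.exp_natCast_mul_log_add_log (by omega) (NeZero.ne D), ← Int.cast_abs]
  exact_mod_cast hnum.trans (by exact_mod_cast pow_mul_two_pow_mul_factorial_pow_le hmD)
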